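/- Memory-limited necessary condition (discrete ML-POSC Pontryagin principle): consider the discrete-time setting where the state is a pair $s = (x,z) \in X \times Z$ (finite sets) and controls depend only on the memory coordinate: $u_t : Z \to U$. If $u^*$ is optimal among memory-feedback controls, then for every $t$ and every $z$ with $p^*_t(z) := \sum_x p^*_t(x,z) > 0$, $u^*_t(z)$ minimizes $u \mapsto \sum_x p^*_t(x\mid z)\,\mathcal{H}(t,(x,z),u,w^*_{t+dt})$, where $p^*_t(x\mid z) = p^*_t(x,z)/p^*_t(z)$, and $p^*$, $w^*$ are the forward distribution and backward value function of $u^*$. -/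

import Mathlib

open Finset

/-- Forward distribution on the extended state space `X × Z` under
memory-feedback controls `u : ℕ → Z → U`. -/
def pFm {X Z U : Type} [Fintype X] [Fintype Z] (P : U → X × Z → X × Z → ℝ)
    (p0 : X × Z → ℝ) (u : ℕ → Z → U) : ℕ → X × Z → ℝ
  | 0 => p0
  | (t+1) => fun s' => ∑ s : X × Z, pFm P p0 u t s * P (u t s.2) s s'

/-- Backward value function under memory-feedback controls, indexed by the
number `k` of remaining steps. -/
def wmAux {X Z U : Type} [Fintype X] [Fintype Z] (P : U → X × Z → X × Z → ℝ)
    (f : ℕ → X × Z → U → ℝ) (g : X × Z → ℝ) (N : ℕ) (u : ℕ → Z → U) :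
    ℕ → X × Z → ℝ
  | 0 => g
  | (k+1) => fun s =>
      f (N - (k+1)) s (u (N - (k+1)) s.2)
        + ∑ s' : X × Z, P (u (N - (k+1)) s.2) s s' * wmAux P f g N u k s'

/-- Backward value function at time `t`, with `w_N = g`. -/
def wmVal {X Z U : Type} [Fintype X] [Fintype Z] (P : U → X × Z → X × Z → ℝ)
    (f : ℕ → X × Z → U → ℝ) (g : X × Z → ℝ) (N : ℕ) (u : ℕ → Z → U) (t : ℕ) :
    X × Z → ℝ :=
  wmAux P f g N u (N - t)

/-- Total expected cost under memory-feedback controls. -/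
def Jm {X Z U : Type} [Fintype X] [Fintype Z] (P : U → X × Z → X × Z → ℝ)
    (p0 : X × Z → ℝ) (f : ℕ → X × Z → U → ℝ) (g : X × Z → ℝ) (N : ℕ)
    (u : ℕ → Z → U) : ℝ :=
  (∑ t ∈ Finset.range N, ∑ s : X × Z, pFm P p0 u t s * f t s (u t s.2))
    + ∑ s : X × Z, pFm P p0 u N s * g s

/-- Discrete Hamiltonian `H(t,s,u,w) = f(t,s,u) + ∑ s' P_u(s,s') w(s') - w(s)`. -/
def Hm {X Z U : Type} [Fintype X] [Fintype Z] (P : U → X × Z → X × Z → ℝ)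
    (f : ℕ → X × Z → U → ℝ) (t : ℕ) (s : X × Z) (v : U) (w : X × Z → ℝ) : ℝ :=
  f t s v + (∑ s' : X × Z, P v s s' * w s') - w s

/-!
Perturb `uStar` at the single time `t` and memory state `z` to the value `v` (a needle
variation). The forward distribution up to time `t` only sees controls before `t`, and the
value function at `t + 1` only controls after `t`, so splitting the cost at `t` shows that
the cost changes by exactly the `pFm t (·, z)`-weighted change of the Hamiltonian. Optimality
makes this change nonnegative, and dividing by the marginal `∑ x, pFm t (x, z) > 0` gives the
conditional form.
-/

section MemoryFeedback

variable {X Z U : Type} [Fintype X] [Fintype Z] (P : U → X × Z → X × Z → ℝ)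
  (p0 : X × Z → ℝ) (f : ℕ → X × Z → U → ℝ) (g : X × Z → ℝ) (N : ℕ)

lemma pFm_congr {u u' : ℕ → Z → U} {t : ℕ} (h : ∀ r < t, u r = u' r) :
    pFm P p0 u t = pFm P p0 u' t := by
  induction t with
  | zero => rfl
  | succ t ih =>
    funext s'
    simp only [pFm, ih fun r hr => h r (Nat.lt_succ_of_lt hr), h t t.lt_succ_self]

lemma wmAux_congr {u u' : ℕ → Z → U} {k : ℕ} (h : ∀ r, N - k ≤ r → u r = u' r) :
    wmAux P f g N u k = wmAux P f g N u' k := by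
  induction k with
  | zero => rfl
  | succ k ih =>
    funext s
    simp only [wmAux, ih fun r hr => h r (le_trans (by omega) hr), h (N - (k + 1)) le_rfl]

lemma wmVal_congr {u u' : ℕ → Z → U} {t : ℕ} (ht : t ≤ N) (h : ∀ r, t ≤ r → u r = u' r) :
    wmVal P f g N u t = wmVal P f g N u' t :=
  wmAux_congr P f g N fun r hr => h r (by omega)

@[simp]
lemma wmVal_self (u : ℕ → Z → U) : wmVal P f g N u N = g := by
  simp [wmVal, wmAux]

lemma wmVal_of_lt (u : ℕ → Z → U) {t : ℕ} (ht : t < N) (s : X × Z) :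
    wmVal P f g N u t s =
      f t s (u t s.2) + ∑ s' : X × Z, P (u t s.2) s s' * wmVal P f g N u (t + 1) s' := by
  obtain ⟨k, hk⟩ : ∃ k, N - t = k + 1 := ⟨N - (t + 1), by omega⟩
  have hkt : N - (k + 1) = t := by omega
  have hk' : N - (t + 1) = k := by omega
  simp only [wmVal, hk, hk', wmAux, hkt]

lemma wmVal_eq_Hm_add (u : ℕ → Z → U) {t : ℕ} (ht : t < N) (s : X × Z) :
    wmVal P f g N u t s =
      Hm P f t s (u t s.2) (wmVal P f g N u (t + 1)) + wmVal P f g N u (t + 1) s := by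
  rw [wmVal_of_lt P f g N u ht, Hm]
  ring

/-- The running cost before time `t` plus the expected cost-to-go from `t`: it is constant
in `t ≤ N` and equals `Jm` at `t = N`. -/
def costSplitAt (u : ℕ → Z → U) (t : ℕ) : ℝ :=
  (∑ r ∈ range t, ∑ s : X × Z, pFm P p0 u r s * f r s (u r s.2))
    + ∑ s : X × Z, pFm P p0 u t s * wmVal P f g N u t s

lemma costSplitAt_succ (u : ℕ → Z → U) {t : ℕ} (ht : t < N) :
    costSplitAt P p0 f g N u (t + 1) = costSplitAt P p0 f g N u t := by
  have hpush : ∑ s' : X × Z, pFm P p0 u (t + 1) s' * wmVal P f g N u (t + 1) s'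
      = ∑ s : X × Z, pFm P p0 u t s *
          ∑ s' : X × Z, P (u t s.2) s s' * wmVal P f g N u (t + 1) s' := by
    simp only [pFm, sum_mul, mul_sum, mul_assoc]
    exact sum_comm
  simp only [costSplitAt, sum_range_succ, wmVal_of_lt P f g N u ht, mul_add, sum_add_distrib,
    hpush]
  ring

lemma Jm_eq_costSplitAt (u : ℕ → Z → U) {t : ℕ} (ht : t ≤ N) :
    Jm P p0 f g N u = costSplitAt P p0 f g N u t := by
  have hconst : ∀ r ≤ N, costSplitAt P p0 f g N u r = costSplitAt P p0 f g N u 0 := by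
    intro r hr
    induction r with
    | zero => rfl
    | succ r ih => rw [costSplitAt_succ P p0 f g N u (by omega), ih (by omega)]
  rw [hconst t ht, ← hconst N le_rfl, costSplitAt, wmVal_self, Jm]

lemma Jm_sub_Jm_of_eq_of_ne {u u' : ℕ → Z → U} {t : ℕ} (ht : t < N)
    (h : ∀ r ≠ t, u' r = u r) :
    Jm P p0 f g N u' - Jm P p0 f g N u
      = ∑ s : X × Z, pFm P p0 u t s *
          (Hm P f t s (u' t s.2) (wmVal P f g N u (t + 1))
            - Hm P f t s (u t s.2) (wmVal P f g N u (t + 1))) := by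
  have hp : ∀ r ≤ t, pFm P p0 u' r = pFm P p0 u r :=
    fun r _ => pFm_congr P p0 fun r' hr' => h r' (by omega)
  have hw : wmVal P f g N u' (t + 1) = wmVal P f g N u (t + 1) :=
    wmVal_congr P f g N ht fun r hr => h r (by omega)
  have hprefix : ∀ r ∈ range t, ∑ s : X × Z, pFm P p0 u' r s * f r s (u' r s.2)
      = ∑ s : X × Z, pFm P p0 u r s * f r s (u r s.2) := by
    intro r hr
    have hrt := mem_range.1 hr
    rw [hp r hrt.le, h r hrt.ne]
  rw [Jm_eq_costSplitAt P p0 f g N u' ht.le, Jm_eq_costSplitAt P p0 f g N u ht.le, costSplitAt,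
    costSplitAt, sum_congr rfl hprefix, hp t le_rfl]
  simp only [wmVal_eq_Hm_add P f g N _ ht, hw]
  rw [add_sub_add_left_eq_sub, ← sum_sub_distrib]
  exact sum_congr rfl fun s _ => by ring

end MemoryFeedback

lemma sum_mul_sub_update_eq_sum_fiber {X Z U : Type} [Fintype X] [Fintype Z] [DecidableEq Z]
    (p : X × Z → ℝ) (F : X × Z → U → ℝ) (c : Z → U) (z : Z) (v : U) :
    ∑ s : X × Z, p s * (F s (Function.update c z v s.2) - F s (c s.2))
      = ∑ x : X, p (x, z) * (F (x, z) v - F (x, z) (c z)) := by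
  rw [Fintype.sum_prod_type_right, Fintype.sum_eq_single z fun z' hz' => by
    simp only [Function.update_of_ne hz', sub_self, mul_zero, sum_const_zero]]
  simp only [Function.update_self]

theorem discrete_ML_POSC_pontryagin_necessary_condition_general
    {X Z U : Type} [Fintype X] [Fintype Z]
    (P : U → X × Z → X × Z → ℝ)
    (p0 : X × Z → ℝ)
    (f : ℕ → X × Z → U → ℝ) (g : X × Z → ℝ) (N : ℕ)
    (uStar : ℕ → Z → U)
    -- optimality among all memory-feedback controls
    (hopt : ∀ u : ℕ → Z → U, Jm P p0 f g N uStar ≤ Jm P p0 f g N u) :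
    ∀ t < N, ∀ z : Z, 0 < (∑ x : X, pFm P p0 uStar t (x, z)) →
      ∀ v : U,
        (∑ x : X, (pFm P p0 uStar t (x, z) / ∑ x' : X, pFm P p0 uStar t (x', z)) *
          Hm P f t (x, z) (uStar t z) (wmVal P f g N uStar (t+1)))
        ≤ ∑ x : X, (pFm P p0 uStar t (x, z) / ∑ x' : X, pFm P p0 uStar t (x', z)) *
          Hm P f t (x, z) v (wmVal P f g N uStar (t+1)) := by
  classical
  intro t ht z hz v
  set uNeedle : ℕ → Z → U := Function.update uStar t (Function.update (uStar t) z v)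
  have hvariation := Jm_sub_Jm_of_eq_of_ne P p0 f g N (u' := uNeedle) ht
    fun r hr => Function.update_of_ne hr _ _
  simp only [uNeedle, Function.update_self] at hvariation
  rw [sum_mul_sub_update_eq_sum_fiber (pFm P p0 uStar t)
    (fun s a => Hm P f t s a (wmVal P f g N uStar (t + 1)))] at hvariation
  have hfiber : 0 ≤ ∑ x : X, pFm P p0 uStar t (x, z) *
      (Hm P f t (x, z) v (wmVal P f g N uStar (t + 1))
        - Hm P f t (x, z) (uStar t z) (wmVal P f g N uStar (t + 1))) := by
    rw [← hvariation, sub_nonneg]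
    exact hopt _
  simp only [mul_sub, sum_sub_distrib, sub_nonneg] at hfiber
  simp only [div_mul_eq_mul_div, ← sum_div]
  exact div_le_div_of_nonneg_right hfiber hz.le

theorem discrete_ML_POSC_pontryagin_necessary_condition
    {X Z U : Type} [Fintype X] [Fintype Z]
    (P : U → X × Z → X × Z → ℝ)
    (hPnonneg : ∀ u s s', 0 ≤ P u s s')
    (hPsum : ∀ u s, ∑ s' : X × Z, P u s s' = 1)
    (p0 : X × Z → ℝ) (hp0nonneg : ∀ s, 0 ≤ p0 s)
    (hp0sum : ∑ s : X × Z, p0 s = 1)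
    (f : ℕ → X × Z → U → ℝ) (g : X × Z → ℝ) (N : ℕ)
    (uStar : ℕ → Z → U)
    -- optimality among all memory-feedback controls
    (hopt : ∀ u : ℕ → Z → U, Jm P p0 f g N uStar ≤ Jm P p0 f g N u) :
    ∀ t < N, ∀ z : Z, 0 < (∑ x : X, pFm P p0 uStar t (x, z)) →
      ∀ v : U,
        (∑ x : X, (pFm P p0 uStar t (x, z) / ∑ x' : X, pFm P p0 uStar t (x', z)) *
          Hm P f t (x, z) (uStar t z) (wmVal P f g N uStar (t+1)))
        ≤ ∑ x : X, (pFm P p0 uStar t (x, z) / ∑ x' : X, pFm P p0 uStar t (x', z)) *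
          Hm P f t (x, z) v (wmVal P f g N uStar (t+1)) :=
  discrete_ML_POSC_pontryagin_necessary_condition_general P p0 f g N uStar hopt
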